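/- If f: Dⁿ → ℝ is α-bisubmodular and μ is a probability distribution on Dⁿ with marginal x attaining the minimum of Σ_a λ(a)f(a) over all distributions λ with marginal x, and whose support is not a chain, then there exists another minimizing distribution ν with marginal x such that Σ_a ν(a)z(a)² > Σ_a μ(a)z(a)², where z(a) is the number of zero coordinates of a. -/

import Mathlib

open Finset

/-- The three-element domain `D = {-α, 0, 1}`, abstractly. -/
inductive D3 : Type
  | neg : D3
  | zero : D3
  | one : D3
deriving DecidableEq

instance : Fintype D3 :=
  ⟨{D3.neg, D3.zero, D3.one}, by rintro (_ | _ | _) <;> simp⟩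

namespace D3

/-- The embedding of `D3` into `ℝ` sending `neg ↦ -α`, `zero ↦ 0`, `one ↦ 1`. -/
def emb (α : ℝ) : D3 → ℝ
  | neg => -α
  | zero => 0
  | one => 1

/-- The partial order `0 ≺ 1`, `0 ≺ -α`, with `1` and `-α` incomparable. -/
instance : PartialOrder D3 where
  le x y := x = y ∨ x = zero
  le_refl x := Or.inl rfl
  le_trans x y z hxy hyz := by
    rcases hxy with rfl | rfl
    · exact hyz
    · exact Or.inr rfl
  le_antisymm x y hxy hyx := by
    rcases hxy with rfl | rfl
    · rfl
    · rcases hyx with rfl | rfl <;> rfl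

/-- `∧₀` : `1 ∧₀ (-α) = (-α) ∧₀ 1 = 0`, and min w.r.t. `≺` otherwise. -/
def meet0 (x y : D3) : D3 := if x = y then x else zero

/-- `∨₀` : `1 ∨₀ (-α) = (-α) ∨₀ 1 = 0`, and max w.r.t. `≺` otherwise. -/
def join0 (x y : D3) : D3 :=
  if x = y then x else if x = zero then y else if y = zero then x else zero

/-- `∨₁` : `1 ∨₁ (-α) = (-α) ∨₁ 1 = 1`, and max w.r.t. `≺` otherwise. -/
def join1 (x y : D3) : D3 :=
  if x = y then x else if x = zero then y else if y = zero then x else one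

end D3

/-- Componentwise `∧₀` on `Dⁿ`. -/
def vmeet0 {n : ℕ} (a b : Fin n → D3) : Fin n → D3 := fun i => D3.meet0 (a i) (b i)

/-- Componentwise `∨₀` on `Dⁿ`. -/
def vjoin0 {n : ℕ} (a b : Fin n → D3) : Fin n → D3 := fun i => D3.join0 (a i) (b i)

/-- Componentwise `∨₁` on `Dⁿ`. -/
def vjoin1 {n : ℕ} (a b : Fin n → D3) : Fin n → D3 := fun i => D3.join1 (a i) (b i)

/-- `lam` is a probability distribution on `Dⁿ`. -/
def IsDist (n : ℕ) (lam : (Fin n → D3) → ℝ) : Prop :=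
  (∀ a, 0 ≤ lam a ∧ lam a ≤ 1) ∧ ∑ a : Fin n → D3, lam a = 1

/-- `lam` has marginal vector `x`, i.e. `Σ_a lam(a)·a = x` in `ℝⁿ`. -/
def HasMarginal (α : ℝ) (n : ℕ) (lam : (Fin n → D3) → ℝ) (x : Fin n → ℝ) : Prop :=
  ∀ i, ∑ a : Fin n → D3, lam a * D3.emb α (a i) = x i

/-- The support of `lam` forms a chain w.r.t. the componentwise order on `Dⁿ`. -/
def ChainSupp (n : ℕ) (lam : (Fin n → D3) → ℝ) : Prop :=
  ∀ a b : Fin n → D3, lam a ≠ 0 → lam b ≠ 0 → a ≤ b ∨ b ≤ a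

/-- The box `[-α,1]ⁿ`. -/
def Box (α : ℝ) (n : ℕ) : Set (Fin n → ℝ) := {x | ∀ i, x i ∈ Set.Icc (-α) 1}

/-- `f : Dⁿ → ℝ` is α-bisubmodular. -/
def AlphaBisub (α : ℝ) (n : ℕ) (f : (Fin n → D3) → ℝ) : Prop :=
  ∀ a b : Fin n → D3,
    f (vmeet0 a b) + α * f (vjoin0 a b) + (1 - α) * f (vjoin1 a b) ≤ f a + f b

/-- Number of zero coordinates. -/
def zc {n : ℕ} (c : Fin n → D3) : ℕ := (Finset.univ.filter fun i => c i = D3.zero).card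

/-- The convex closure `f⁻(x)`. -/
noncomputable def cClos (α : ℝ) (n : ℕ) (f : (Fin n → D3) → ℝ) (x : Fin n → ℝ) : ℝ :=
  sInf {y | ∃ lam, IsDist n lam ∧ HasMarginal α n lam x ∧ y = ∑ a : Fin n → D3, lam a * f a}

/-! Pick incomparable `a`, `b` in the support of `μ` and move the mass `ε = min (μ a) (μ b)` from
`a` and `b` to `a ∧₀ b`, `a ∨₀ b`, `a ∨₁ b` with weights `1`, `α`, `1 - α`. Coordinatewise
`x + y = (x ∧₀ y) + α (x ∨₀ y) + (1 - α) (x ∨₁ y)` in `ℝ`, so total mass and marginal are kept, and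
α-bisubmodularity says the cost does not increase, so the new distribution is again a minimizer.
Sorting the coordinates into the four kinds "both zero", "only `a i` zero", "only `b i` zero",
"distinct and nonzero" computes all five zero counts; incomparability of `a` and `b` makes the
change of `Σ z²` strictly positive. -/

namespace D3

theorem le_def {x y : D3} : x ≤ y ↔ x = y ∨ x = zero := Iff.rfl

theorem emb_meet0_add_join (α : ℝ) (x y : D3) :
    emb α (meet0 x y) + α * emb α (join0 x y) + (1 - α) * emb α (join1 x y) =
      emb α x + emb α y := by
  cases x <;> cases y <;> simp [meet0, join0, join1, emb] <;> ring

end D3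

theorem Finset.sum_add_mul_mul {ι : Type*} [Fintype ι] (μ w g : ι → ℝ) (ε : ℝ) :
    ∑ c, (μ c + ε * w c) * g c = ∑ c, μ c * g c + ε * ∑ c, w c * g c := by
  simp only [add_mul, sum_add_distrib, mul_sum, mul_assoc]

section Shift

variable {n : ℕ} {α : ℝ}

theorem isDist_of_nonneg {lam : (Fin n → D3) → ℝ} (h0 : ∀ c, 0 ≤ lam c)
    (h1 : ∑ c, lam c = 1) : IsDist n lam :=
  ⟨fun c => ⟨h0 c, h1 ▸ single_le_sum (fun d _ => h0 d) (mem_univ c)⟩, h1⟩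

theorem IsDist.add_mul {μ w : (Fin n → D3) → ℝ} {ε : ℝ} (hμ : IsDist n μ)
    (hw : ∑ c, w c = 0) (hν : ∀ c, 0 ≤ μ c + ε * w c) :
    IsDist n fun c => μ c + ε * w c := by
  refine isDist_of_nonneg hν ?_
  simpa [hμ.2, hw] using Finset.sum_add_mul_mul μ w 1 ε

theorem HasMarginal.add_mul {μ w : (Fin n → D3) → ℝ} {x : Fin n → ℝ} (ε : ℝ)
    (hμ : HasMarginal α n μ x) (hw : ∀ i, ∑ c, w c * D3.emb α (c i) = 0) :
    HasMarginal α n (fun c => μ c + ε * w c) x := fun i => by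
  rw [Finset.sum_add_mul_mul, hμ i, hw i, mul_zero, add_zero]

def bisubShift (α : ℝ) (a b c : Fin n → D3) : ℝ :=
  (if c = vmeet0 a b then 1 else 0) + α * (if c = vjoin0 a b then 1 else 0)
    + (1 - α) * (if c = vjoin1 a b then 1 else 0) - (if c = a then 1 else 0)
    - (if c = b then 1 else 0)

theorem sum_bisubShift_mul (α : ℝ) (a b : Fin n → D3) (g : (Fin n → D3) → ℝ) :
    ∑ c, bisubShift α a b c * g c =
      g (vmeet0 a b) + α * g (vjoin0 a b) + (1 - α) * g (vjoin1 a b) - g a - g b := by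
  simp only [bisubShift, add_mul, sub_mul, mul_assoc, ite_mul, one_mul, zero_mul,
    sum_add_distrib, sum_sub_distrib, ← mul_sum, sum_ite_eq', mem_univ, if_true]

theorem sum_bisubShift (α : ℝ) (a b : Fin n → D3) : ∑ c, bisubShift α a b c = 0 := by
  simpa using sum_bisubShift_mul α a b 1

theorem sum_bisubShift_mul_emb (α : ℝ) (a b : Fin n → D3) (i : Fin n) :
    ∑ c, bisubShift α a b c * D3.emb α (c i) = 0 := by
  rw [sum_bisubShift_mul]
  unfold vmeet0 vjoin0 vjoin1
  linarith [D3.emb_meet0_add_join α (a i) (b i)]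

theorem AlphaBisub.sum_bisubShift_mul_nonpos {f : (Fin n → D3) → ℝ} (hf : AlphaBisub α n f)
    (a b : Fin n → D3) : ∑ c, bisubShift α a b c * f c ≤ 0 := by
  rw [sum_bisubShift_mul]
  linarith [hf a b]

theorem add_mul_bisubShift_nonneg {μ : (Fin n → D3) → ℝ} {ε : ℝ} {a b : Fin n → D3}
    (hα : α ∈ Set.Icc (0 : ℝ) 1) (hab : a ≠ b) (hμ : ∀ c, 0 ≤ μ c) (hε : 0 ≤ ε)
    (ha : ε ≤ μ a) (hb : ε ≤ μ b) (c : Fin n → D3) : 0 ≤ μ c + ε * bisubShift α a b c := by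
  have hεα : 0 ≤ ε * α := mul_nonneg hε hα.1
  have hεα' : 0 ≤ ε * (1 - α) := mul_nonneg hε (sub_nonneg.2 hα.2)
  unfold bisubShift
  rcases eq_or_ne c a with rfl | hca
  · simp only [if_neg hab]
    split_ifs <;> nlinarith
  rcases eq_or_ne c b with rfl | hcb
  · simp only [if_neg hca]
    split_ifs <;> nlinarith
  simp only [if_neg hca, if_neg hcb]
  split_ifs <;> nlinarith [hμ c]

end Shift

theorem sq_gain_of_counts {α : ℝ} (hα : 0 ≤ α) {s p q c : ℕ} (hp : 1 ≤ p + c)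
    (hq : 1 ≤ q + c) :
    ((s + p : ℕ) : ℝ) ^ 2 + ((s + q : ℕ) : ℝ) ^ 2 <
      ((s + p + q + c : ℕ) : ℝ) ^ 2 + α * ((s + c : ℕ) : ℝ) ^ 2 + (1 - α) * (s : ℝ) ^ 2 := by
  have hpq : (1 : ℝ) ≤ ((p + c) * (q + c) : ℕ) := by exact_mod_cast Nat.mul_le_mul hp hq
  push_cast at hpq ⊢
  have hrest : 0 ≤ α * (c : ℝ) ^ 2 + 2 * (1 + α) * s * c + p * q + p * c + q * c := by positivity
  nlinarith

theorem exists_ne_zero_of_not_le {n : ℕ} {a b : Fin n → D3} (h : ¬ a ≤ b) :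
    ∃ i, a i ≠ b i ∧ a i ≠ .zero := by
  simpa [Pi.le_def, D3.le_def, not_or] using h

theorem zc_sq_gain {n : ℕ} {α : ℝ} (hα : 0 ≤ α) {a b : Fin n → D3} (hab : ¬ a ≤ b)
    (hba : ¬ b ≤ a) :
    (zc a : ℝ) ^ 2 + (zc b : ℝ) ^ 2 <
      (zc (vmeet0 a b) : ℝ) ^ 2 + α * (zc (vjoin0 a b) : ℝ) ^ 2
        + (1 - α) * (zc (vjoin1 a b) : ℝ) ^ 2 := by
  set S := #{i | a i = .zero ∧ b i = .zero}
  set P := #{i | a i = .zero ∧ b i ≠ .zero}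
  set Q := #{i | a i ≠ .zero ∧ b i = .zero}
  set C := #{i | a i ≠ b i ∧ a i ≠ .zero ∧ b i ≠ .zero}
  have hza : zc a = S + P := by
    rw [zc, card_filter]
    simp only [S, P, card_filter, ← sum_add_distrib]
    exact sum_congr rfl fun i _ => by cases a i <;> cases b i <;> rfl
  have hzb : zc b = S + Q := by
    rw [zc, card_filter]
    simp only [S, Q, card_filter, ← sum_add_distrib]
    exact sum_congr rfl fun i _ => by cases a i <;> cases b i <;> rfl
  have hzm : zc (vmeet0 a b) = S + P + Q + C := by
    rw [zc, card_filter]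
    simp only [S, P, Q, C, card_filter, ← sum_add_distrib]
    exact sum_congr rfl fun i _ => by unfold vmeet0; cases a i <;> cases b i <;> rfl
  have hzj0 : zc (vjoin0 a b) = S + C := by
    rw [zc, card_filter]
    simp only [S, C, card_filter, ← sum_add_distrib]
    exact sum_congr rfl fun i _ => by unfold vjoin0; cases a i <;> cases b i <;> rfl
  have hzj1 : zc (vjoin1 a b) = S := by
    rw [zc, card_filter]
    simp only [S, card_filter]
    exact sum_congr rfl fun i _ => by unfold vjoin1; cases a i <;> cases b i <;> rfl
  have hPC : 1 ≤ P + C := by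
    obtain ⟨i, hne, hbi⟩ := exists_ne_zero_of_not_le hba
    by_cases hai : a i = .zero
    · exact Nat.le_add_right_of_le (card_pos.2 ⟨i, by simp [hai, hbi]⟩)
    · exact Nat.le_add_left_of_le (card_pos.2 ⟨i, by simp [hai, hbi, hne.symm]⟩)
  have hQC : 1 ≤ Q + C := by
    obtain ⟨i, hne, hai⟩ := exists_ne_zero_of_not_le hab
    by_cases hbi : b i = .zero
    · exact Nat.le_add_right_of_le (card_pos.2 ⟨i, by simp [hai, hbi]⟩)
    · exact Nat.le_add_left_of_le (card_pos.2 ⟨i, by simp [hai, hbi, hne]⟩)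
  rw [hza, hzb, hzm, hzj0, hzj1]
  exact sq_gain_of_counts hα hPC hQC

/-- a minimizing distribution whose support is not a chain can be
improved to another minimizer with strictly larger `Σ λ(a) z(a)²`. -/
theorem stmt14 (α : ℝ) (hα : α ∈ Set.Ioc (0 : ℝ) 1) (n : ℕ) (f : (Fin n → D3) → ℝ)
    (hf : AlphaBisub α n f) (x : Fin n → ℝ) (mu : (Fin n → D3) → ℝ)
    (h1 : IsDist n mu) (h2 : HasMarginal α n mu x)
    (hmin : ∀ lam : (Fin n → D3) → ℝ, IsDist n lam → HasMarginal α n lam x →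
      ∑ a : Fin n → D3, mu a * f a ≤ ∑ a : Fin n → D3, lam a * f a)
    (hnc : ¬ ChainSupp n mu) :
    ∃ nu : (Fin n → D3) → ℝ, IsDist n nu ∧ HasMarginal α n nu x ∧
      (∀ lam : (Fin n → D3) → ℝ, IsDist n lam → HasMarginal α n lam x →
        ∑ a : Fin n → D3, nu a * f a ≤ ∑ a : Fin n → D3, lam a * f a) ∧
      ∑ a : Fin n → D3, mu a * (zc a : ℝ) ^ 2 < ∑ a : Fin n → D3, nu a * (zc a : ℝ) ^ 2 := by
  obtain ⟨a, b, ha, hb, hab, hba⟩ : ∃ a b, mu a ≠ 0 ∧ mu b ≠ 0 ∧ ¬ a ≤ b ∧ ¬ b ≤ a := by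
    simpa [ChainSupp, not_or] using hnc
  set ε := min (mu a) (mu b)
  have hε : 0 < ε := lt_min ((h1.1 a).1.lt_of_ne' ha) ((h1.1 b).1.lt_of_ne' hb)
  have hsum := Finset.sum_add_mul_mul mu (bisubShift α a b) (ε := ε)
  have hcost : ∑ c, (mu c + ε * bisubShift α a b c) * f c ≤ ∑ c, mu c * f c := by
    rw [hsum]
    linarith [mul_nonpos_of_nonneg_of_nonpos hε.le (hf.sum_bisubShift_mul_nonpos a b)]
  refine ⟨fun c => mu c + ε * bisubShift α a b c,
    h1.add_mul (sum_bisubShift α a b)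
      (add_mul_bisubShift_nonneg (Set.Ioc_subset_Icc_self hα) (ne_of_not_le hab)
        (fun c => (h1.1 c).1) hε.le (min_le_left _ _) (min_le_right _ _)),
    h2.add_mul ε (sum_bisubShift_mul_emb α a b),
    fun lam hl hx => hcost.trans (hmin lam hl hx), ?_⟩
  rw [hsum, sum_bisubShift_mul]
  linarith [mul_pos hε (sub_pos.2 (zc_sq_gain hα.1.le hab hba))]
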